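/- arXiv:1409.1397 — 4 statements merged into one kernel-verified Lean document; each statement's English description precedes it below -/
import Mathlib

section
/- Let X be a finite connected k-regular graph with smallest positive Laplacian eigenvalue λ₁(X). Then for every subset W of the vertices, the number of edges with both endpoints in W satisfies |E(W,W)| ≤ (1/2)·(k − (|V\W|/|V|)·λ₁(X))·|W|. -/
/-!
Let `χ` be the indicator vector of `W` and `x = χ - (|W|/|V|)·𝟙` its projection onto the
orthogonal complement of the constants. For a connected graph the constants are exactly the kernel
of the Laplacian `L`, so expanding `x` in an eigenbasis of `L` gives the Rayleigh bound
`λ₁ ‖x‖² ≤ xᵀ L x`. Since `L` kills constants, `xᵀ L x = χᵀ L χ = k|W| - 2|E(W,W)|`, while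
`‖x‖² = |W| |V \ W| / |V|`.
-/

open Finset Matrix

namespace Matrix.IsHermitian

variable {n : Type*} [Fintype n] [DecidableEq n] {A : Matrix n n ℝ} (hA : A.IsHermitian)

theorem dotProduct_eq_sum_eigenvectorBasis (x y : n → ℝ) :
    x ⬝ᵥ y = ∑ i, (⇑(hA.eigenvectorBasis i) ⬝ᵥ x) * (⇑(hA.eigenvectorBasis i) ⬝ᵥ y) := by
  simpa [EuclideanSpace.inner_eq_star_dotProduct, dotProduct_comm] using
    (hA.eigenvectorBasis.sum_inner_mul_inner (WithLp.toLp 2 x) (WithLp.toLp 2 y)).symm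

theorem eigenvectorBasis_dotProduct_mulVec (x : n → ℝ) (i : n) :
    ⇑(hA.eigenvectorBasis i) ⬝ᵥ (A *ᵥ x) =
      hA.eigenvalues i * (⇑(hA.eigenvectorBasis i) ⬝ᵥ x) := by
  have hsymm : Aᵀ = A := by simpa using hA.eq
  have hswap := dotProduct_transpose_mulVec A x (hA.eigenvectorBasis i)
  rw [hsymm] at hswap
  rw [← hswap, hA.mulVec_eigenvectorBasis, dotProduct_smul, smul_eq_mul, dotProduct_comm]

theorem dotProduct_self_eq_sum_sq (x : n → ℝ) :
    x ⬝ᵥ x = ∑ i, (⇑(hA.eigenvectorBasis i) ⬝ᵥ x) ^ 2 := by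
  simp only [hA.dotProduct_eq_sum_eigenvectorBasis x x, sq]

theorem dotProduct_mulVec_eq_sum_eigenvalues_mul_sq (x : n → ℝ) :
    x ⬝ᵥ (A *ᵥ x) = ∑ i, hA.eigenvalues i * (⇑(hA.eigenvectorBasis i) ⬝ᵥ x) ^ 2 := by
  simp only [hA.dotProduct_eq_sum_eigenvectorBasis x, eigenvectorBasis_dotProduct_mulVec]
  exact sum_congr rfl fun i _ => by ring

end Matrix.IsHermitian

theorem Matrix.PosSemidef.mul_dotProduct_self_le {n : Type*} [Fintype n] [DecidableEq n]
    {A : Matrix n n ℝ} (hA : A.PosSemidef) {lam : ℝ}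
    (hlam : ∀ μ ∈ spectrum ℝ A, 0 < μ → lam ≤ μ) {x : n → ℝ}
    (hx : ∀ v, A *ᵥ v = 0 → v ⬝ᵥ x = 0) :
    lam * (x ⬝ᵥ x) ≤ x ⬝ᵥ (A *ᵥ x) := by
  rw [hA.isHermitian.dotProduct_self_eq_sum_sq,
    hA.isHermitian.dotProduct_mulVec_eq_sum_eigenvalues_mul_sq, mul_sum]
  refine sum_le_sum fun i _ => ?_
  rcases (hA.eigenvalues_nonneg i).lt_or_eq with hpos | hzero
  · exact mul_le_mul_of_nonneg_right
      (hlam _ (hA.isHermitian.eigenvalues_mem_spectrum_real i) hpos) (sq_nonneg _)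
  · have hker : A *ᵥ ⇑(hA.isHermitian.eigenvectorBasis i) = 0 := by
      rw [hA.isHermitian.mulVec_eigenvectorBasis, ← hzero, zero_smul]
    simp [hx _ hker]

namespace SimpleGraph

variable {V : Type*} [Fintype V] [DecidableEq V] (G : SimpleGraph V) [DecidableRel G.Adj]

theorem dotProduct_eq_zero_of_lapMatrix_mulVec_eq_zero (hconn : G.Connected) {x v : V → ℝ}
    (hx : ∑ i, x i = 0) (hv : G.lapMatrix ℝ *ᵥ v = 0) : v ⬝ᵥ x = 0 := by
  obtain ⟨i₀⟩ := hconn.nonempty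
  have hconst : ∀ i, v i = v i₀ := fun i =>
    G.lapMatrix_mulVec_eq_zero_iff_forall_reachable.mp hv i i₀ (hconn i i₀)
  simp only [dotProduct, hconst, ← mul_sum, hx, mul_zero]

theorem dotProduct_lapMatrix_mulVec_sub_const (x : V → ℝ) (c : ℝ) :
    (x - Function.const V c) ⬝ᵥ (G.lapMatrix ℝ *ᵥ (x - Function.const V c)) =
      x ⬝ᵥ (G.lapMatrix ℝ *ᵥ x) := by
  simp only [← toLinearMap₂'_apply', lapMatrix_toLinearMap₂', Pi.sub_apply,
    Function.const_apply, sub_sub_sub_cancel_right]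

theorem indicator_dotProduct_lapMatrix_mulVec_indicator (W : Finset V) :
    (W : Set V).indicator 1 ⬝ᵥ (G.lapMatrix ℝ *ᵥ (W : Set V).indicator 1) =
      ∑ u ∈ W, (G.degree u : ℝ) - #{p : V × V | p.1 ∈ W ∧ p.2 ∈ W ∧ G.Adj p.1 p.2} := by
  rw [lapMatrix, sub_mulVec, dotProduct_sub, dotProduct_mulVec_degMatrix,
    dotProduct_mulVec_adjMatrix, card_filter, Nat.cast_sum, Fintype.sum_prod_type]
  congr 1
  · simp [Set.indicator_apply, sum_ite_mem]
  · refine sum_congr rfl fun u _ => sum_congr rfl fun v _ => ?_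
    by_cases hu : u ∈ W <;> by_cases hv : v ∈ W <;> simp [hu, hv]

end SimpleGraph

section CenteredIndicator

variable {V : Type*} [Fintype V] [DecidableEq V] [Nonempty V] (W : Finset V)

theorem sum_indicator_sub_mean :
    ∑ v, ((W : Set V).indicator (1 : V → ℝ) - Function.const V ((#W : ℝ) / Fintype.card V)) v
      = 0 := by
  have hn : (Fintype.card V : ℝ) ≠ 0 := by positivity
  simp [sum_sub_distrib, Set.indicator_apply, mul_div_cancel₀ _ hn]

theorem indicator_sub_mean_dotProduct_self :
    ((W : Set V).indicator (1 : V → ℝ) - Function.const V ((#W : ℝ) / Fintype.card V)) ⬝ᵥ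
        ((W : Set V).indicator (1 : V → ℝ) - Function.const V ((#W : ℝ) / Fintype.card V)) =
      #W * #Wᶜ / Fintype.card V := by
  set χ := (W : Set V).indicator (1 : V → ℝ)
  set c := (#W : ℝ) / Fintype.card V with hc
  have hidem : ∀ v, χ v * χ v = χ v := fun v => by
    by_cases hv : v ∈ W <;> simp [χ, hv]
  have hsum : ∑ v, χ v = #W := by simp [χ, Set.indicator_apply]
  have hn : (Fintype.card V : ℝ) ≠ 0 := by positivity
  calc (χ - Function.const V c) ⬝ᵥ (χ - Function.const V c)
      = ∑ v, ((1 - 2 * c) * χ v + c ^ 2) := sum_congr rfl fun v _ => by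
        simp only [Pi.sub_apply, Function.const_apply]
        linear_combination hidem v
    _ = (1 - 2 * c) * #W + Fintype.card V * c ^ 2 := by
        rw [sum_add_distrib, ← mul_sum, hsum, sum_const, card_univ, nsmul_eq_mul]
    _ = #W * #Wᶜ / Fintype.card V := by
        rw [card_compl, Nat.cast_sub (card_le_univ W), hc]
        field_simp
        ring

end CenteredIndicator

theorem stmt_1_general {V : Type*} [Fintype V] [DecidableEq V]
    (G : SimpleGraph V) [DecidableRel G.Adj] (hconn : G.Connected)
    (k : ℕ) (hreg : G.IsRegularOfDegree k)
    (lam1 : ℝ)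
    (hmin : ∀ μ ∈ spectrum ℝ (G.lapMatrix ℝ), 0 < μ → lam1 ≤ μ)
    (W : Finset V) :
    ((Finset.univ.filter fun p : V × V => p.1 ∈ W ∧ p.2 ∈ W ∧ G.Adj p.1 p.2).card : ℝ) / 2
      ≤ (1 / 2) * ((k : ℝ) - ((Wᶜ.card : ℝ) / (Fintype.card V : ℝ)) * lam1) * (W.card : ℝ) := by
  have : Nonempty V := hconn.nonempty
  have hrayleigh := (G.posSemidef_lapMatrix ℝ).mul_dotProduct_self_le hmin fun _ hv =>
    G.dotProduct_eq_zero_of_lapMatrix_mulVec_eq_zero hconn (sum_indicator_sub_mean W) hv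
  have hdeg : ∑ u ∈ W, (G.degree u : ℝ) = k * #W := by
    simp [hreg.degree_eq, mul_comm]
  rw [indicator_sub_mean_dotProduct_self, G.dotProduct_lapMatrix_mulVec_sub_const,
    G.indicator_dotProduct_lapMatrix_mulVec_indicator, hdeg] at hrayleigh
  have hrw : lam1 * (#W * #Wᶜ / Fintype.card V) = #Wᶜ / Fintype.card V * lam1 * #W := by ring
  linarith

/-- For a finite connected `k`-regular graph `G` with smallest positive
Laplacian eigenvalue `lam1`, the number of edges with both endpoints in `W` (half the number
of ordered adjacent pairs inside `W`) is at most `(1/2)·(k − (|Wᶜ|/|V|)·lam1)·|W|`. -/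
theorem stmt_1 {V : Type*} [Fintype V] [DecidableEq V]
    (G : SimpleGraph V) [DecidableRel G.Adj] (hconn : G.Connected)
    (k : ℕ) (hreg : G.IsRegularOfDegree k)
    (lam1 : ℝ) (hmem : lam1 ∈ spectrum ℝ (G.lapMatrix ℝ)) (hpos : 0 < lam1)
    (hmin : ∀ μ ∈ spectrum ℝ (G.lapMatrix ℝ), 0 < μ → lam1 ≤ μ)
    (W : Finset V) :
    ((Finset.univ.filter fun p : V × V => p.1 ∈ W ∧ p.2 ∈ W ∧ G.Adj p.1 p.2).card : ℝ) / 2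
      ≤ (1 / 2) * ((k : ℝ) - ((Wᶜ.card : ℝ) / (Fintype.card V : ℝ)) * lam1) * (W.card : ℝ) :=
  stmt_1_general G hconn k hreg lam1 hmin W
end

section
/- Let X be a finite pure d-dimensional homogeneous simplicial complex such that c(σ) = #{τ ∈ X(d) : σ ⊆ τ} is constant on X(i). If α ∈ C^i(X, F₂) is locally minimal, then for every vertex v, the localization α_v, viewed as a set of (i−1)-cells of the link X_v, satisfies |α_v| ≤ |X_v(i−1)|/2. -/
open Finset

variable {V : Type*}

/-- The `i`-dimensional faces of `X` (faces with `i+1` vertices). -/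
def faces [DecidableEq V] (X : Finset (Finset V)) (i : ℕ) : Finset (Finset V) :=
  X.filter fun s => s.card = i + 1

/-- `X` is a simplicial complex: it is closed under taking subsets. -/
def IsComplex [DecidableEq V] (X : Finset (Finset V)) : Prop :=
  ∀ s ∈ X, ∀ t ⊆ s, t ∈ X

/-- `X` is pure of dimension `d`: every face is contained in a `d`-dimensional face. -/
def IsPure [DecidableEq V] (X : Finset (Finset V)) (d : ℕ) : Prop :=
  ∀ s ∈ X, ∃ t ∈ faces X d, s ⊆ t

/-- `c(σ)`: the number of `d`-dimensional faces of `X` containing `σ`. -/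
def cnt [DecidableEq V] (X : Finset (Finset V)) (d : ℕ) (σ : Finset V) : ℕ :=
  ((faces X d).filter fun τ => σ ⊆ τ).card

/-- The weight `w(σ) = c(σ)/(C(d+1,i+1)·|X(d)|)` of an `i`-face `σ`. -/
noncomputable def wt [DecidableEq V] (X : Finset (Finset V)) (d i : ℕ) (σ : Finset V) : ℝ :=
  (cnt X d σ : ℝ) / ((((d + 1).choose (i + 1)) : ℝ) * ((faces X d).card : ℝ))

/-- The weighted norm of an `F₂` `i`-cochain, identified with its support. -/
noncomputable def cnorm [DecidableEq V] (X : Finset (Finset V)) (d i : ℕ)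
    (α : Finset (Finset V)) : ℝ :=
  ∑ σ ∈ α, wt X d i σ

/-- The `F₂`-coboundary of an `i`-cochain `α` (identified with its support): the set of
`(i+1)`-faces containing an odd number of `i`-faces from `α`. -/
def coboundary [DecidableEq V] (X : Finset (Finset V)) (i : ℕ)
    (α : Finset (Finset V)) : Finset (Finset V) :=
  (faces X (i + 1)).filter fun σ => ((σ.powersetCard (i + 1)).filter (· ∈ α)).card % 2 = 1

/-- The link of a vertex `v` in `X`. -/
def link [DecidableEq V] (X : Finset (Finset V)) (v : V) : Finset (Finset V) :=
  (X.filter fun s => v ∈ s).image fun s => s.erase v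

/-- The localization `α_v` of a cochain `α` at the vertex `v`. -/
def loc [DecidableEq V] (α : Finset (Finset V)) (v : V) : Finset (Finset V) :=
  (α.filter fun s => v ∈ s).image fun s => s.erase v

/-- `β` is an `i`-coboundary, i.e. `β ∈ B^i(X, F₂)`; for `i = 0` these are the images of the
reduced coboundary map `δ₋₁ : F₂ → C⁰`, namely `0` and the all-ones cochain. -/
def IsCoboundarySet [DecidableEq V] (X : Finset (Finset V)) : ℕ → Finset (Finset V) → Prop
  | 0, β => β = ∅ ∨ β = faces X 0
  | i + 1, β => ∃ γ ⊆ faces X i, β = coboundary X i γ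

/-- `β` is a minimal `i`-cochain: it has minimal weighted norm in its coset mod `B^i`. -/
def IsMinimal [DecidableEq V] (X : Finset (Finset V)) (d i : ℕ)
    (β : Finset (Finset V)) : Prop :=
  ∀ γ : Finset (Finset V), IsCoboundarySet X i γ → cnorm X d i β ≤ cnorm X d i (symmDiff β γ)

/-- `α ∈ C^i(X,F₂)` is locally minimal: for every vertex `v`, the localization `α_v` is a
minimal `(i-1)`-cochain of the link `X_v` (a pure `(d-1)`-dimensional complex). -/
def LocallyMinimal [DecidableEq V] (X : Finset (Finset V)) (d i : ℕ)
    (α : Finset (Finset V)) : Prop :=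
  ∀ v : V, IsMinimal (link X v) (d - 1) (i - 1) (loc α v)

/-! In the link `X_v` the number of top faces through `σ` is `c(σ ∪ {v})`, so it is constant on
the `(i-1)`-faces and so are the weights; minimality of `β = α_v` then just says that `|β|` cannot
be lowered by adding a coboundary. Adding the coboundary of a single face `τ` (the star of `τ`)
shows that `β` contains at most half of the faces around each `τ`, and double counting over
all `τ` gives `2|β| ≤ |X_v(i-1)|`. For `i = 1` one adds the all-ones coboundary instead. -/

namespace Finset

variable {α : Type*} [DecidableEq α]

lemma card_symmDiff_add_two_mul_card_inter (s t : Finset α) :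
    #(symmDiff s t) + 2 * #(s ∩ t) = #s + #t := by
  have hst := card_sdiff_add_card_inter s t
  have hts := card_sdiff_add_card_inter t s
  rw [inter_comm] at hts
  rw [symmDiff_def, sup_eq_union, card_union_of_disjoint disjoint_sdiff_sdiff]
  omega

lemma two_mul_card_inter_le_of_card_le_card_symmDiff {s t : Finset α}
    (h : #s ≤ #(symmDiff s t)) : 2 * #(s ∩ t) ≤ #t := by
  have := card_symmDiff_add_two_mul_card_inter s t
  omega

end Finset

section Complex

variable [DecidableEq V]

lemma mem_link {X : Finset (Finset V)} {v : V} {σ : Finset V} :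
    σ ∈ link X v ↔ insert v σ ∈ X ∧ v ∉ σ := by
  constructor
  · simp only [link, mem_image, mem_filter]
    rintro ⟨s, ⟨hs, hv⟩, rfl⟩
    rw [insert_erase hv]
    exact ⟨hs, notMem_erase _ _⟩
  · rintro ⟨hX, hv⟩
    exact mem_image.2 ⟨insert v σ, mem_filter.2 ⟨hX, mem_insert_self _ _⟩, erase_insert hv⟩

lemma mem_faces_link {X : Finset (Finset V)} {v : V} {j : ℕ} {σ : Finset V} :
    σ ∈ faces (link X v) j ↔ insert v σ ∈ faces X (j + 1) ∧ v ∉ σ := by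
  simp only [faces, mem_filter, mem_link]
  constructor
  · rintro ⟨⟨hX, hv⟩, hcard⟩
    exact ⟨⟨hX, by rw [card_insert_of_notMem hv, hcard]⟩, hv⟩
  · rintro ⟨⟨hX, hcard⟩, hv⟩
    exact ⟨⟨hX, hv⟩, by rwa [card_insert_of_notMem hv, add_left_inj] at hcard⟩

lemma IsComplex.link {X : Finset (Finset V)} (hX : IsComplex X) (v : V) :
    IsComplex (link X v) := by
  intro σ hσ τ hτσ
  rw [mem_link] at hσ ⊢
  exact ⟨hX _ hσ.1 _ (insert_subset_insert v hτσ), fun hv => hσ.2 (hτσ hv)⟩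

lemma loc_subset_faces_link {X α : Finset (Finset V)} {j : ℕ} (hα : α ⊆ faces X (j + 1))
    (v : V) : loc α v ⊆ faces (link X v) j := by
  intro σ hσ
  obtain ⟨s, hs, rfl⟩ := mem_image.1 hσ
  obtain ⟨hsα, hv⟩ := mem_filter.1 hs
  rw [mem_faces_link, insert_erase hv]
  exact ⟨hα hsα, notMem_erase _ _⟩

lemma cnt_link {X : Finset (Finset V)} {v : V} {d : ℕ} {σ : Finset V} (hv : v ∉ σ) :
    cnt (link X v) d σ = cnt X (d + 1) (insert v σ) := by
  refine card_nbij' (insert v) (erase · v) ?_ ?_ ?_ ?_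
  · intro τ hτ
    simp only [coe_filter, Set.mem_ofPred_eq, mem_faces_link] at hτ ⊢
    exact ⟨hτ.1.1, insert_subset_insert v hτ.2⟩
  · intro τ hτ
    simp only [coe_filter, Set.mem_ofPred_eq, mem_faces_link] at hτ ⊢
    have hvτ : v ∈ τ := hτ.2 (mem_insert_self v σ)
    rw [insert_erase hvτ]
    refine ⟨⟨hτ.1, notMem_erase _ _⟩, fun x hx => mem_erase.2 ⟨?_, hτ.2 (mem_insert_of_mem hx)⟩⟩
    rintro rfl
    exact hv hx
  · intro τ hτ
    simp only [coe_filter, Set.mem_ofPred_eq, mem_faces_link] at hτ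
    exact erase_insert hτ.1.2
  · intro τ hτ
    simp only [coe_filter, Set.mem_ofPred_eq] at hτ
    exact insert_erase (hτ.2 (mem_insert_self v σ))

lemma IsPure.cnt_pos {X : Finset (Finset V)} {d : ℕ} (hX : IsPure X d) {σ : Finset V}
    (hσ : σ ∈ X) : 0 < cnt X d σ := by
  obtain ⟨t, ht, hσt⟩ := hX σ hσ
  exact card_pos.2 ⟨t, mem_filter.2 ⟨ht, hσt⟩⟩

lemma wt_pos {X : Finset (Finset V)} {d j : ℕ} {σ : Finset V} (hjd : j ≤ d)
    (hσ : 0 < cnt X d σ) : 0 < wt X d j σ := by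
  have htop : 0 < #(faces X d) := hσ.trans_le (card_filter_le _ _)
  unfold wt
  have := Nat.choose_pos (Nat.succ_le_succ hjd)
  positivity

lemma IsComplex.card_faces_filter_subset {Y : Finset (Finset V)} (hY : IsComplex Y) {j : ℕ}
    {σ : Finset V} (hσ : σ ∈ faces Y (j + 1)) : #((faces Y j).filter (· ⊆ σ)) = j + 2 := by
  obtain ⟨hσY, hσcard⟩ := mem_filter.1 hσ
  have : (faces Y j).filter (· ⊆ σ) = σ.powersetCard (j + 1) := by
    ext τ
    simp only [faces, mem_filter, mem_powersetCard]
    exact ⟨fun h => ⟨h.2, h.1.2⟩, fun h => ⟨⟨hY σ hσY τ h.1, h.2⟩, h.1⟩⟩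
  rw [this, card_powersetCard, hσcard, Nat.choose_succ_self_right]

lemma coboundary_singleton {Y : Finset (Finset V)} {j : ℕ} {τ : Finset V} (hτ : #τ = j + 1) :
    coboundary Y j {τ} = (faces Y (j + 1)).filter (τ ⊆ ·) := by
  refine filter_congr fun σ _ => ?_
  rw [filter_mem_eq_inter, inter_singleton]
  by_cases hτσ : τ ⊆ σ
  · simp [hτσ, mem_powersetCard, hτ]
  · simp [hτσ, mem_powersetCard]

end Complex

section Minimal

variable [DecidableEq V] {Y : Finset (Finset V)} {e j : ℕ} {β : Finset (Finset V)} {w : ℝ}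

lemma cnorm_eq_card_mul {B : Finset (Finset V)} (hB : B ⊆ faces Y j)
    (hwt : ∀ σ ∈ faces Y j, wt Y e j σ = w) : cnorm Y e j B = #B * w := by
  rw [cnorm, sum_congr rfl fun σ hσ => hwt σ (hB hσ), sum_const, nsmul_eq_mul]

lemma IsMinimal.two_mul_card_inter_le (hmin : IsMinimal Y e j β) (hβ : β ⊆ faces Y j)
    (hw : 0 < w) (hwt : ∀ σ ∈ faces Y j, wt Y e j σ = w) {γ : Finset (Finset V)}
    (hγ : γ ⊆ faces Y j) (hγcob : IsCoboundarySet Y j γ) : 2 * #(β ∩ γ) ≤ #γ := by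
  have hβγ : symmDiff β γ ⊆ faces Y j := by
    rw [symmDiff_def, sup_eq_union]
    exact union_subset (sdiff_subset.trans hβ) (sdiff_subset.trans hγ)
  have h := hmin γ hγcob
  rw [cnorm_eq_card_mul hβ hwt, cnorm_eq_card_mul hβγ hwt] at h
  exact two_mul_card_inter_le_of_card_le_card_symmDiff (by exact_mod_cast le_of_mul_le_mul_right h hw)

lemma two_mul_card_le_of_forall_star (hY : IsComplex Y) (hβ : β ⊆ faces Y (j + 1))
    (hstar : ∀ τ ∈ faces Y j,
      2 * #(β.filter (τ ⊆ ·)) ≤ #((faces Y (j + 1)).filter (τ ⊆ ·))) :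
    2 * #β ≤ #(faces Y (j + 1)) := by
  have hcount : ∀ B ⊆ faces Y (j + 1),
      ∑ τ ∈ faces Y j, #(B.filter (τ ⊆ ·)) = #B * (j + 2) := by
    intro B hB
    calc ∑ τ ∈ faces Y j, #(B.filter (τ ⊆ ·))
        = ∑ σ ∈ B, #((faces Y j).filter (· ⊆ σ)) :=
          sum_card_bipartiteAbove_eq_sum_card_bipartiteBelow (r := fun τ σ : Finset V => τ ⊆ σ)
      _ = #B * (j + 2) := by
          rw [sum_congr rfl fun σ hσ => hY.card_faces_filter_subset (hB hσ), sum_const,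
            smul_eq_mul]
  refine Nat.le_of_mul_le_mul_right ?_ (Nat.succ_pos (j + 1))
  calc 2 * #β * (j + 2) = ∑ τ ∈ faces Y j, 2 * #(β.filter (τ ⊆ ·)) := by
        rw [← mul_sum, hcount β hβ, mul_assoc]
    _ ≤ ∑ τ ∈ faces Y j, #((faces Y (j + 1)).filter (τ ⊆ ·)) := sum_le_sum hstar
    _ = #(faces Y (j + 1)) * (j + 2) := hcount _ subset_rfl

theorem IsMinimal.two_mul_card_le (hmin : IsMinimal Y e j β) (hY : IsComplex Y)
    (hβ : β ⊆ faces Y j) (hw : 0 < w) (hwt : ∀ σ ∈ faces Y j, wt Y e j σ = w) :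
    2 * #β ≤ #(faces Y j) := by
  cases j with
  | zero =>
    simpa [inter_eq_left.2 hβ] using
      hmin.two_mul_card_inter_le hβ hw hwt subset_rfl (Or.inr rfl)
  | succ j =>
    refine two_mul_card_le_of_forall_star hY hβ fun τ hτ => ?_
    have hcob : IsCoboundarySet Y (j + 1) ((faces Y (j + 1)).filter (τ ⊆ ·)) :=
      ⟨{τ}, singleton_subset_iff.2 hτ, (coboundary_singleton (mem_filter.1 hτ).2).symm⟩
    have := hmin.two_mul_card_inter_le hβ hw hwt (filter_subset _ _) hcob
    rwa [inter_filter, inter_eq_left.2 hβ] at this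

end Minimal

theorem stmt_5_general {V : Type*} [DecidableEq V]
    (X : Finset (Finset V)) (d i : ℕ) (hi : 1 ≤ i) (hid : i ≤ d)
    (hcpx : IsComplex X) (hpure : IsPure X d)
    (hconst : ∃ k : ℕ, ∀ σ ∈ faces X i, cnt X d σ = k)
    (α : Finset (Finset V)) (hα : α ⊆ faces X i)
    (hmin : LocallyMinimal X d i α) :
    ∀ v : V, 2 * (loc α v).card ≤ (faces (link X v) (i - 1)).card := by
  intro v
  obtain ⟨k, hk⟩ := hconst
  obtain ⟨i, rfl⟩ := Nat.exists_eq_add_of_le' hi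
  obtain ⟨d, rfl⟩ := Nat.exists_eq_add_of_le' (hi.trans hid)
  have hminv : IsMinimal (link X v) d i (loc α v) := hmin v
  simp only [Nat.add_sub_cancel]
  have hloc := loc_subset_faces_link hα v
  rcases (loc α v).eq_empty_or_nonempty with hempty | ⟨σ₀, hσ₀⟩
  · simp [hempty]
  have hcnt : ∀ σ ∈ faces (link X v) i, cnt (link X v) d σ = k := fun σ hσ => by
    obtain ⟨hσX, hv⟩ := mem_faces_link.1 hσ
    rw [cnt_link hv, hk _ hσX]
  obtain ⟨hσ₀X, -⟩ := mem_faces_link.1 (hloc hσ₀)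
  have hk_pos : 0 < k := hk _ hσ₀X ▸ hpure.cnt_pos (mem_filter.1 hσ₀X).1
  have hw : 0 < wt (link X v) d i σ₀ :=
    wt_pos (Nat.le_of_succ_le_succ hid) ((hcnt σ₀ (hloc hσ₀)).symm ▸ hk_pos)
  exact hminv.two_mul_card_le (hcpx.link v) hloc hw
    fun σ hσ => by simp only [wt, hcnt σ hσ, hcnt σ₀ (hloc hσ₀)]

/-- Let `X` be a finite pure `d`-dimensional homogeneous simplicial complex
such that `c(σ)` is constant on `X(i)`. If `α ∈ C^i(X,F₂)` is locally minimal, then for every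
vertex `v` the localization `α_v`, as a set of `(i-1)`-cells of the link `X_v`, satisfies
`|α_v| ≤ |X_v(i-1)|/2`. -/
theorem stmt_5 {V : Type*} [Fintype V] [DecidableEq V]
    (X : Finset (Finset V)) (d i : ℕ) (hd : 1 ≤ d) (hi : 1 ≤ i) (hid : i ≤ d)
    (hcpx : IsComplex X) (hpure : IsPure X d)
    (hvert : ∀ v : V, {v} ∈ X)
    (hhom : ∃ m : ℕ, ∀ v : V, (faces (link X v) (d - 1)).card = m)
    (hconst : ∃ k : ℕ, ∀ σ ∈ faces X i, cnt X d σ = k)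
    (α : Finset (Finset V)) (hα : α ⊆ faces X i)
    (hmin : LocallyMinimal X d i α) :
    ∀ v : V, 2 * (loc α v).card ≤ (faces (link X v) (i - 1)).card :=
  stmt_5_general X d i hi hid hcpx hpure hconst α hα hmin
end

section
/- Let X be a pure 3-dimensional simplicial complex and β ∈ C²(X, F₂). For each vertex v let β_v¹ ∈ C¹(X_v, F₂) be the localization of β (on triangles through v) and β_v² ∈ C²(X_v, F₂) the restriction of β to triangles in the link of v. Then 4·|δ₂β| = Σ_{v ∈ X(0)} |δ₁β_v¹ + β_v²|, where the sum of cochains is taken mod 2. Consequently, if each triangle of X lies in exactly q+1 tetrahedra, |δ₂β| ≥ (1/4)·Σ_v |δ₁β_v¹| − ((q+1)/4)·|β|. -/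
open Finset

variable {V : Type*}

section Aux

variable [DecidableEq V]

lemma mem_loc_iff {β : Finset (Finset V)} {v : V} {e : Finset V} (hv : v ∉ e) :
    e ∈ loc β v ↔ insert v e ∈ β := by
  simp only [loc, mem_image, mem_filter]
  constructor
  · rintro ⟨s, ⟨hs, hvs⟩, rfl⟩
    rwa [Finset.insert_erase hvs]
  · intro h
    exact ⟨insert v e, ⟨h, mem_insert_self _ _⟩, Finset.erase_insert hv⟩

lemma mem_faces_link_iff {X : Finset (Finset V)} {v : V} {T : Finset V} :
    T ∈ faces (link X v) 2 ↔ v ∉ T ∧ insert v T ∈ faces X 3 := by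
  simp only [faces, link, mem_filter, mem_image]
  constructor
  · rintro ⟨⟨s, ⟨hs, hvs⟩, rfl⟩, hcard⟩
    have hc := Finset.card_erase_add_one hvs
    refine ⟨Finset.notMem_erase _ _, ?_, ?_⟩
    · rwa [Finset.insert_erase hvs]
    · rw [Finset.insert_erase hvs]; omega
  · rintro ⟨hvT, hX, hcard⟩
    have hc : T.card = 3 := by
      rw [Finset.card_insert_of_notMem hvT] at hcard; omega
    exact ⟨⟨insert v T, ⟨hX, mem_insert_self _ _⟩, Finset.erase_insert hvT⟩, hc⟩

lemma powersetCard_three {P : Finset V} {v : V} (hP : P.card = 4) (hv : v ∈ P) :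
    P.powersetCard 3 = insert (P.erase v) (((P.erase v).powersetCard 2).image (insert v)) := by
  ext s
  simp only [Finset.mem_powersetCard, mem_insert, mem_image]
  constructor
  · rintro ⟨hsP, hs3⟩
    by_cases hvs : v ∈ s
    · right
      refine ⟨s.erase v, ⟨Finset.erase_subset_erase _ hsP, ?_⟩, Finset.insert_erase hvs⟩
      rw [Finset.card_erase_of_mem hvs, hs3]
    · left
      refine Finset.eq_of_subset_of_card_le (Finset.subset_erase.2 ⟨hsP, hvs⟩) ?_
      rw [Finset.card_erase_of_mem hv, hP, hs3]
  · rintro (rfl | ⟨e, ⟨heT, he2⟩, rfl⟩)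
    · exact ⟨Finset.erase_subset _ _, by rw [Finset.card_erase_of_mem hv, hP]⟩
    · have hve : v ∉ e := fun h => Finset.notMem_erase v P (heT h)
      exact ⟨Finset.insert_subset hv (heT.trans (Finset.erase_subset _ _)),
        by rw [Finset.card_insert_of_notMem hve, he2]⟩

lemma key_count {β : Finset (Finset V)} {P : Finset V} {v : V} (hP : P.card = 4) (hv : v ∈ P) :
    ((P.powersetCard 3).filter (· ∈ β)).card
      = (((P.erase v).powersetCard 2).filter (· ∈ loc β v)).card
        + (if P.erase v ∈ β then 1 else 0) := by
  have hveT : ∀ e ∈ (P.erase v).powersetCard 2, v ∉ e := fun e he h =>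
    Finset.notMem_erase v P ((Finset.mem_powersetCard.1 he).1 h)
  have himg : (((P.erase v).powersetCard 2).image (insert v)).filter (· ∈ β)
      = (((P.erase v).powersetCard 2).filter (· ∈ loc β v)).image (insert v) := by
    rw [Finset.filter_image]
    congr 1
    apply Finset.filter_congr
    intro e he
    simp only [mem_loc_iff (hveT e he)]
  have hinj : ((((P.erase v).powersetCard 2).filter (· ∈ loc β v)).image (insert v)).card
      = (((P.erase v).powersetCard 2).filter (· ∈ loc β v)).card := by
    apply Finset.card_image_of_injOn
    intro a ha b hb hab
    have hva := hveT a (Finset.mem_filter.1 ha).1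
    have hvb := hveT b (Finset.mem_filter.1 hb).1
    rw [← Finset.erase_insert hva, ← Finset.erase_insert hvb, hab]
  have hTnot : P.erase v ∉ (((P.erase v).powersetCard 2).image (insert v)).filter (· ∈ β) := by
    intro h
    obtain ⟨e, he, heq⟩ := Finset.mem_image.1 (Finset.mem_filter.1 h).1
    exact Finset.notMem_erase v P (heq ▸ mem_insert_self v e)
  rw [powersetCard_three hP hv, Finset.filter_insert]
  by_cases hTβ : P.erase v ∈ β
  · rw [if_pos hTβ, if_pos hTβ, Finset.card_insert_of_notMem hTnot, himg, hinj]
  · rw [if_neg hTβ, if_neg hTβ, himg, hinj, Nat.add_zero]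

end Aux

/-- Let `X` be a pure 3-dimensional simplicial complex and `β ∈ C²(X,F₂)`.
For each vertex `v`, let `β_v¹ ∈ C¹(X_v,F₂)` be the localization of `β` at `v` and
`β_v² ∈ C²(X_v,F₂)` the restriction of `β` to triangles of the link. Then
`4·|δ₂β| = Σ_v |δ₁β_v¹ + β_v²|` (sum of cochains mod 2, i.e. symmetric difference of supports);
consequently, if each triangle lies in exactly `q+1` tetrahedra,
`|δ₂β| ≥ (1/4)·Σ_v |δ₁β_v¹| − ((q+1)/4)·|β|`. -/
theorem stmt_15 {V : Type*} [Fintype V] [DecidableEq V] (X : Finset (Finset V)) (q : ℕ)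
    (hcpx : IsComplex X) (hpure : IsPure X 3)
    (hq : ∀ T ∈ faces X 2, cnt X 3 T = q + 1)
    (β : Finset (Finset V)) (hβ : β ⊆ faces X 2) :
    4 * (coboundary X 2 β).card
        = ∑ v : V, (symmDiff (coboundary (link X v) 1 (loc β v))
            ((faces (link X v) 2).filter (· ∈ β))).card
      ∧ ((coboundary X 2 β).card : ℝ)
          ≥ (1 / 4) * (∑ v : V, ((coboundary (link X v) 1 (loc β v)).card : ℝ))
            - (((q : ℝ) + 1) / 4) * (β.card : ℝ) := by

  classical
  set A := coboundary X 2 β with hA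
  have hface4 : ∀ P ∈ A, P.card = 4 := fun P hP =>
    (Finset.mem_filter.1 (Finset.mem_filter.1 hP).1).2
  -- per-vertex identification of the symmetric difference
  have hSv : ∀ v : V,
      (symmDiff (coboundary (link X v) 1 (loc β v)) ((faces (link X v) 2).filter (· ∈ β))).card
        = (A.filter fun P => v ∈ P).card := by
    intro v
    have hset : symmDiff (coboundary (link X v) 1 (loc β v))
          ((faces (link X v) 2).filter (· ∈ β))
        = (faces (link X v) 2).filter (fun T => insert v T ∈ A) := by
      ext T
      by_cases hT : T ∈ faces (link X v) 2
      · obtain ⟨hvT, hins⟩ := mem_faces_link_iff.1 hT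
        have hP4 : (insert v T).card = 4 := (Finset.mem_filter.1 hins).2
        have hkey := key_count (β := β) hP4 (mem_insert_self v T)
        rw [Finset.erase_insert hvT] at hkey
        set n := ((T.powersetCard 2).filter (· ∈ loc β v)).card with hn
        have hC : T ∈ coboundary (link X v) 1 (loc β v) ↔ n % 2 = 1 := by
          simp [coboundary, Finset.mem_filter, hT, hn]
        have hBm : T ∈ (faces (link X v) 2).filter (· ∈ β) ↔ T ∈ β := by
          simp [Finset.mem_filter, hT]
        have hAm : insert v T ∈ A ↔ (n + if T ∈ β then 1 else 0) % 2 = 1 := by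
          simp only [hA, coboundary, Finset.mem_filter, hins, true_and]
          rw [hkey]
        simp only [Finset.mem_symmDiff, Finset.mem_filter, hC, hAm, hT, true_and]
        by_cases hTβ : T ∈ β
        · rw [if_pos hTβ]
          simp only [hTβ, not_true, and_false, false_or, and_true, true_and]
          omega
        · rw [if_neg hTβ]
          simp only [hTβ, not_false_eq_true, and_true, false_and, or_false, true_and]
          omega
      · have h1 : T ∉ coboundary (link X v) 1 (loc β v) := fun h =>
          hT (Finset.mem_filter.1 h).1
        have h2 : T ∉ (faces (link X v) 2).filter (· ∈ β) := fun h =>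
          hT (Finset.mem_filter.1 h).1
        simp [Finset.mem_symmDiff, h1, h2, hT]
    rw [hset]
    refine Finset.card_nbij' (fun T => insert v T) (fun P => P.erase v) ?_ ?_ ?_ ?_
    · intro T hT
      obtain ⟨hTf, hTA⟩ := Finset.mem_filter.1 hT
      exact Finset.mem_filter.2 ⟨hTA, mem_insert_self v T⟩
    · intro P hP
      obtain ⟨hPA, hvP⟩ := Finset.mem_filter.1 hP
      have hP3 : P ∈ faces X 3 := (Finset.mem_filter.1 hPA).1
      refine Finset.mem_filter.2 ⟨mem_faces_link_iff.2 ⟨Finset.notMem_erase _ _, ?_⟩, ?_⟩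
      · rwa [Finset.insert_erase hvP]
      · rwa [Finset.insert_erase hvP]
    · intro T hT
      obtain ⟨hTf, _⟩ := Finset.mem_filter.1 hT
      exact Finset.erase_insert (mem_faces_link_iff.1 hTf).1
    · intro P hP
      exact Finset.insert_erase (Finset.mem_filter.1 hP).2
  -- double counting over vertices of tetrahedra
  have hdouble : ∑ v : V, (A.filter fun P => v ∈ P).card = 4 * A.card := by
    have h1 : ∀ v : V, (A.filter fun P => v ∈ P).card
        = ∑ P ∈ A, if v ∈ P then 1 else 0 := fun v => Finset.card_filter _ _
    rw [Finset.sum_congr rfl fun v _ => h1 v, Finset.sum_comm]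
    have h2 : ∀ P ∈ A, (∑ v : V, if v ∈ P then 1 else 0) = 4 := by
      intro P hP
      rw [Finset.sum_ite_mem, Finset.univ_inter, Finset.sum_const, smul_eq_mul, mul_one]
      exact hface4 P hP
    rw [Finset.sum_congr rfl h2, Finset.sum_const, smul_eq_mul]
    ring
  have heq : 4 * A.card = ∑ v : V, (symmDiff (coboundary (link X v) 1 (loc β v))
      ((faces (link X v) 2).filter (· ∈ β))).card := by
    rw [Finset.sum_congr rfl fun v _ => hSv v, hdouble]
  refine ⟨heq, ?_⟩
  -- counting Σ_v |β_v²| = (q+1)|β|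
  have hB : ∑ v : V, ((faces (link X v) 2).filter (· ∈ β)).card = (q + 1) * β.card := by
    have h1 : ∀ v : V, ((faces (link X v) 2).filter (· ∈ β)).card
        = ∑ T ∈ β, if T ∈ faces (link X v) 2 then 1 else 0 := by
      intro v
      rw [← Finset.card_filter]
      congr 1
      ext T
      simp only [Finset.mem_filter]
      tauto
    rw [Finset.sum_congr rfl fun v _ => h1 v, Finset.sum_comm]
    have h2 : ∀ T ∈ β, (∑ v : V, if T ∈ faces (link X v) 2 then 1 else 0) = q + 1 := by
      intro T hT
      have hT3 : T.card = 3 := (Finset.mem_filter.1 (hβ hT)).2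
      rw [← hq T (hβ hT)]
      rw [Finset.sum_boole]
      norm_cast
      show (Finset.univ.filter fun v => T ∈ faces (link X v) 2).card = cnt X 3 T
      refine Finset.card_nbij (fun v => insert v T) ?_ ?_ ?_
      · intro v hv
        obtain ⟨hvT, hins⟩ := mem_faces_link_iff.1 (Finset.mem_filter.1 hv).2
        exact Finset.mem_filter.2 ⟨hins, Finset.subset_insert v T⟩
      · intro a ha b hb hab
        simp only [Finset.coe_filter, Set.mem_setOf_eq] at ha hb
        have hva := (mem_faces_link_iff.1 ha.2).1
        have hvb := (mem_faces_link_iff.1 hb.2).1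
        have hab' : insert a T = insert b T := hab
        have : a ∈ insert b T := hab' ▸ mem_insert_self a T
        rcases Finset.mem_insert.1 this with h | h
        · exact h
        · exact absurd h hva
      · intro τ hτ
        simp only [Finset.coe_filter, Set.mem_setOf_eq] at hτ
        obtain ⟨hτ3, hTτ⟩ := hτ
        have hτ4 : τ.card = 4 := (Finset.mem_filter.1 hτ3).2
        obtain ⟨v, hvτ, hvT⟩ : ∃ v ∈ τ, v ∉ T := by
          by_contra hcon
          push_neg at hcon
          have : τ ⊆ T := hcon
          have := Finset.card_le_card this
          omega
        refine ⟨v, ?_, ?_⟩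
        · simp only [Finset.coe_filter, Set.mem_setOf_eq]
          refine ⟨Finset.mem_univ v, mem_faces_link_iff.2 ⟨hvT, ?_⟩⟩
          have hsub : insert v T ⊆ τ := Finset.insert_subset hvτ hTτ
          have : insert v T = τ := Finset.eq_of_subset_of_card_le hsub (by
            rw [hτ4, Finset.card_insert_of_notMem hvT, hT3])
          rw [this]; exact hτ3
        · have hsub : insert v T ⊆ τ := Finset.insert_subset hvτ hTτ
          exact Finset.eq_of_subset_of_card_le hsub (by
            rw [hτ4, Finset.card_insert_of_notMem hvT, hT3])
    rw [Finset.sum_congr rfl h2, Finset.sum_const, smul_eq_mul]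
    ring
  -- triangle inequality per vertex
  have htri : ∀ v : V, (coboundary (link X v) 1 (loc β v)).card
      ≤ (symmDiff (coboundary (link X v) 1 (loc β v))
          ((faces (link X v) 2).filter (· ∈ β))).card
        + ((faces (link X v) 2).filter (· ∈ β)).card := by
    intro v
    set C := coboundary (link X v) 1 (loc β v)
    set B := (faces (link X v) 2).filter (· ∈ β)
    calc C.card ≤ (symmDiff C B ∪ B).card := by
          apply Finset.card_le_card
          intro x hx
          by_cases hxB : x ∈ B
          · exact Finset.mem_union_right _ hxB
          · exact Finset.mem_union_left _ (Finset.mem_symmDiff.2 (Or.inl ⟨hx, hxB⟩))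
      _ ≤ _ := Finset.card_union_le _ _
  have hsum : ∑ v : V, (coboundary (link X v) 1 (loc β v)).card
      ≤ 4 * A.card + (q + 1) * β.card := by
    calc ∑ v : V, (coboundary (link X v) 1 (loc β v)).card
        ≤ ∑ v : V, ((symmDiff (coboundary (link X v) 1 (loc β v))
            ((faces (link X v) 2).filter (· ∈ β))).card
          + ((faces (link X v) 2).filter (· ∈ β)).card) :=
          Finset.sum_le_sum fun v _ => htri v
      _ = (∑ v : V, (symmDiff (coboundary (link X v) 1 (loc β v))
            ((faces (link X v) 2).filter (· ∈ β))).card)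
          + ∑ v : V, ((faces (link X v) 2).filter (· ∈ β)).card := Finset.sum_add_distrib
      _ = 4 * A.card + (q + 1) * β.card := by rw [← heq, hB]
  have hsum' : ((∑ v : V, (coboundary (link X v) 1 (loc β v)).card : ℕ) : ℝ)
      ≤ ((4 * A.card + (q + 1) * β.card : ℕ) : ℝ) := Nat.cast_le.2 hsum
  push_cast at hsum'
  linarith
end

section
/- Let X be a pure 3-dimensional simplicial complex, α a set of triangles of X. For each edge e of X, let α_e be the set of triangles of α containing e, regarded as a set of vertices of the link graph X_e, and let t_i be the number of tetrahedra containing exactly i triangles of α. Then Σ_{e ∈ X(1)} |E_{X_e}(α_e, ∁α_e)| = 3t₁ + 4t₂ + 3t₃. -/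
open Finset

variable {V : Type*}

/-- The link of an arbitrary face `e` of `X`. -/
def linkF [DecidableEq V] (X : Finset (Finset V)) (e : Finset V) : Finset (Finset V) :=
  (X.filter fun s => e ⊆ s).image fun s => s \ e

lemma key_insert [DecidableEq V] {τ e : Finset V} {u v : V} (he : e ⊆ τ)
    (hτe : τ \ e = {u, v}) (huv : u ≠ v) : insert u e = τ.erase v := by
  have hv : v ∈ τ \ e := by rw [hτe]; simp
  have hveq : v ∉ e := (mem_sdiff.1 hv).2
  have hτeq : τ = e ∪ {u, v} := by rw [← hτe, union_sdiff_of_subset he]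
  ext x
  simp only [mem_insert, mem_erase, hτeq, mem_union, mem_insert, mem_singleton]
  constructor
  · rintro (rfl | hx)
    · exact ⟨huv, Or.inr (Or.inl rfl)⟩
    · exact ⟨fun h => hveq (h ▸ hx), Or.inl hx⟩
  · rintro ⟨hxv, hx | rfl | rfl⟩
    · exact Or.inr hx
    · exact Or.inl rfl
    · exact absurd rfl hxv

lemma tetra [DecidableEq V] (τ : Finset V) (hτ : τ.card = 4) (α : Finset (Finset V)) :
    ((τ.powersetCard 2).filter fun e => ((τ \ e).filter fun u => insert u e ∈ α).card = 1).card
      = ((τ.powersetCard 3).filter (· ∈ α)).card *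
        (4 - ((τ.powersetCard 3).filter (· ∈ α)).card) := by
  classical
  set m := τ.filter (fun v => τ.erase v ∈ α) with hm
  have hmsub : m ⊆ τ := filter_subset _ _
  have hmem : ∀ v ∈ τ, (v ∈ m ↔ τ.erase v ∈ α) := by
    intro v hv; rw [hm, mem_filter]; simp [hv]
  -- Claim A
  have hA : ((τ.powersetCard 3).filter (· ∈ α)).card = m.card := by
    refine (Finset.card_bij (fun v _ => τ.erase v) ?_ ?_ ?_).symm
    · intro v hv
      have hv' := mem_filter.1 hv
      show τ.erase v ∈ _
      rw [mem_filter, mem_powersetCard]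
      exact ⟨⟨erase_subset _ _, by rw [card_erase_of_mem hv'.1, hτ]⟩, hv'.2⟩
    · intro a ha b hb hab
      have ha' := hmsub ha; have hb' := hmsub hb
      by_contra hne
      have h2 : a ∈ τ.erase b := mem_erase.2 ⟨hne, ha'⟩
      rw [← hab] at h2
      exact (mem_erase.1 h2).1 rfl
    · intro σ hσ
      rw [mem_filter, mem_powersetCard] at hσ
      obtain ⟨⟨hsub, hcard⟩, hσα⟩ := hσ
      have h1 : (τ \ σ).card = 1 := by rw [card_sdiff_of_subset hsub, hτ, hcard]
      obtain ⟨v, hv⟩ := card_eq_one.1 h1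
      have hvτ : v ∈ τ := (mem_sdiff.1 (hv ▸ mem_singleton_self v)).1
      have hvσ : v ∉ σ := (mem_sdiff.1 (hv ▸ mem_singleton_self v)).2
      have heq : τ.erase v = σ := by
        refine (Finset.eq_of_subset_of_card_le ?_ ?_).symm
        · intro x hx
          exact mem_erase.2 ⟨fun h => hvσ (h ▸ hx), hsub hx⟩
        · rw [card_erase_of_mem hvτ, hτ, hcard]
      exact ⟨v, (hmem v hvτ).2 (heq ▸ hσα), heq⟩
  rw [hA]
  -- Claim B
  have hB : ((τ.powersetCard 2).filter fun e =>
      ((τ \ e).filter fun u => insert u e ∈ α).card = 1).card = (m ×ˢ (τ \ m)).card := by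
    refine (Finset.card_bij (fun p _ => τ \ ({p.1, p.2} : Finset V)) ?_ ?_ ?_).symm
    · rintro ⟨x, y⟩ hp
      simp only [mem_product, mem_sdiff] at hp
      obtain ⟨hx, hyτ, hym⟩ := hp
      have hxτ := hmsub hx
      have hxy : x ≠ y := fun h => hym (h ▸ hx)
      have hpair : ({x, y} : Finset V) ⊆ τ := by
        intro z hz; rcases mem_insert.1 hz with rfl | hz
        · exact hxτ
        · rw [mem_singleton] at hz; exact hz ▸ hyτ
      have hpc : ({x, y} : Finset V).card = 2 := card_pair hxy
      have hsd : τ \ (τ \ ({x, y} : Finset V)) = {x, y} := Finset.sdiff_sdiff_eq_self hpair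
      show τ \ ({x, y} : Finset V) ∈ _
      rw [mem_filter, mem_powersetCard]
      refine ⟨⟨sdiff_subset, by rw [card_sdiff_of_subset hpair, hτ, hpc]⟩, ?_⟩
      rw [hsd]
      have hix : insert x (τ \ ({x,y} : Finset V)) = τ.erase y :=
        key_insert sdiff_subset hsd hxy
      have hiy : insert y (τ \ ({x,y} : Finset V)) = τ.erase x := by
        have : τ \ (τ \ ({x, y} : Finset V)) = {y, x} := by rw [hsd]; exact pair_comm x y
        exact key_insert sdiff_subset this hxy.symm
      have : ({x, y} : Finset V).filter (fun u => insert u (τ \ ({x,y} : Finset V)) ∈ α)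
          = {y} := by
        rw [filter_insert, if_neg, filter_singleton, if_pos]
        · rw [hiy]; exact (hmem x hxτ).1 hx
        · rw [hix]; exact fun h => hym ((hmem y hyτ).2 h)
      rw [this, card_singleton]
    · rintro ⟨x, y⟩ hp ⟨x', y'⟩ hp' hab
      simp only [mem_product, mem_sdiff] at hp hp'
      simp only at hab
      obtain ⟨hx, hyτ, hym⟩ := hp
      obtain ⟨hx', hyτ', hym'⟩ := hp'
      have hpair : ({x, y} : Finset V) ⊆ τ := by
        intro z hz; rcases mem_insert.1 hz with rfl | hz
        · exact hmsub hx
        · rw [mem_singleton] at hz; exact hz ▸ hyτ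
      have hpair' : ({x', y'} : Finset V) ⊆ τ := by
        intro z hz; rcases mem_insert.1 hz with rfl | hz
        · exact hmsub hx'
        · rw [mem_singleton] at hz; exact hz ▸ hyτ'
      have hpe : ({x, y} : Finset V) = {x', y'} := by
        have := congrArg (τ \ ·) hab
        simpa [Finset.sdiff_sdiff_eq_self hpair, Finset.sdiff_sdiff_eq_self hpair'] using this
      have hx'm : x' ∈ ({x, y} : Finset V) := hpe ▸ mem_insert_self x' {y'}
      have hxx : x = x' := by
        rcases mem_insert.1 hx'm with h | h
        · exact h.symm
        · rw [mem_singleton] at h; exact absurd (h ▸ hx') hym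
      have hy'm : y' ∈ ({x, y} : Finset V) := hpe ▸ mem_insert.2 (Or.inr (mem_singleton_self y'))
      have hyy : y = y' := by
        rcases mem_insert.1 hy'm with h | h
        · exact absurd (h ▸ hx) hym'
        · exact (mem_singleton.1 h).symm
      exact Prod.ext hxx hyy
    · intro e he'
      rw [mem_filter, mem_powersetCard] at he'
      obtain ⟨⟨hsub, hcard⟩, hQ⟩ := he'
      have h2 : (τ \ e).card = 2 := by rw [card_sdiff_of_subset hsub, hτ, hcard]
      obtain ⟨u, v, huv, hsd⟩ := card_eq_two.1 h2
      have huτ : u ∈ τ := (mem_sdiff.1 (hsd ▸ mem_insert_self u {v})).1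
      have hvτ : v ∈ τ := (mem_sdiff.1 (hsd ▸ mem_insert.2 (Or.inr (mem_singleton_self v)))).1
      have hiu : insert u e = τ.erase v := key_insert hsub hsd huv
      have hiv : insert v e = τ.erase u :=
        key_insert hsub (by rw [hsd]; exact pair_comm u v) huv.symm
      have hee : τ \ ({u, v} : Finset V) = e := by rw [← hsd, Finset.sdiff_sdiff_eq_self hsub]
      rw [hsd] at hQ
      by_cases hum : τ.erase u ∈ α <;> by_cases hvm : τ.erase v ∈ α
      · exfalso
        rw [filter_insert, if_pos (hiu ▸ hvm), filter_singleton, if_pos (hiv ▸ hum)] at hQ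
        rw [card_insert_of_notMem (by simp [huv]), card_singleton] at hQ
        omega
      · -- u marked, v not: pair (u, v)
        refine ⟨(u, v), ?_, hee⟩
        simp only [mem_product, mem_sdiff]
        exact ⟨(hmem u huτ).2 hum, hvτ, fun h => hvm ((hmem v hvτ).1 h)⟩
      · refine ⟨(v, u), ?_, by show τ \ ({v, u} : Finset V) = e; rw [pair_comm v u]; exact hee⟩
        simp only [mem_product, mem_sdiff]
        exact ⟨(hmem v hvτ).2 hvm, huτ, fun h => hum ((hmem u huτ).1 h)⟩
      · exfalso
        rw [filter_insert, if_neg (fun h => hvm (hiu ▸ h)), filter_singleton,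
          if_neg (fun h => hum (hiv ▸ h)), card_empty] at hQ
        omega
  rw [hB, card_product, card_sdiff_of_subset hmsub, hτ]


/-- Let `X` be a pure 3-dimensional simplicial complex and `α` a set of
triangles. For each edge `e`, regard `α_e` (triangles of `α` containing `e`) as a set of
vertices of the link graph `X_e`; then the total number of link edges crossing the cuts
`(α_e, ∁α_e)` equals `3t₁ + 4t₂ + 3t₃`, where `t i` counts tetrahedra with exactly `i`
faces in `α`. -/
theorem stmt_16 [DecidableEq V] (X : Finset (Finset V))
    (hcpx : IsComplex X) (hpure : IsPure X 3)
    (α : Finset (Finset V)) (hα : α ⊆ faces X 2)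
    (t : ℕ → ℕ)
    (ht : ∀ n, t n = ((faces X 3).filter fun P =>
      ((P.powersetCard 3).filter (· ∈ α)).card = n).card) :
    ∑ e ∈ faces X 1, ((faces (linkF X e) 1).filter fun s =>
        (s.filter fun u => insert u e ∈ α).card = 1).card
      = 3 * t 1 + 4 * t 2 + 3 * t 3 := by
  classical
  -- step 1: per-edge rewrite
  have step1 : ∀ e ∈ faces X 1,
      ((faces (linkF X e) 1).filter fun s => (s.filter fun u => insert u e ∈ α).card = 1).card
        = ((faces X 3).filter fun τ => e ⊆ τ ∧
            ((τ \ e).filter fun u => insert u e ∈ α).card = 1).card := by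
    intro e he
    have hecard : e.card = 2 := (mem_filter.1 he).2
    have him : faces (linkF X e) 1 = ((faces X 3).filter fun τ => e ⊆ τ).image (· \ e) := by
      ext s
      simp only [faces, linkF, mem_filter, mem_image, filter_filter]
      constructor
      · rintro ⟨⟨τ, ⟨hτX, hτe⟩, rfl⟩, hc⟩
        have : τ.card = 4 := by
          have := card_sdiff_add_card_eq_card hτe
          omega
        exact ⟨τ, ⟨hτX, this, hτe⟩, rfl⟩
      · rintro ⟨τ, ⟨hτX, hτ4, hτe⟩, rfl⟩
        refine ⟨⟨τ, ⟨hτX, hτe⟩, rfl⟩, ?_⟩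
        have := card_sdiff_add_card_eq_card hτe
        omega
    rw [him, filter_image, card_image_of_injOn, filter_filter]
    intro a ha b hb hab
    simp only [coe_filter, Set.mem_setOf_eq, mem_coe, mem_filter] at ha hb
    have h := congrArg (e ∪ ·) hab
    simpa [union_sdiff_of_subset ha.1.2, union_sdiff_of_subset hb.1.2] using h
  rw [Finset.sum_congr rfl step1]
  -- step 2: swap sums
  have step2 : ∑ e ∈ faces X 1, ((faces X 3).filter fun τ => e ⊆ τ ∧
        ((τ \ e).filter fun u => insert u e ∈ α).card = 1).card
      = ∑ τ ∈ faces X 3, ((faces X 1).filter fun e => e ⊆ τ ∧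
        ((τ \ e).filter fun u => insert u e ∈ α).card = 1).card := by
    simp only [Finset.card_filter]
    rw [Finset.sum_comm]
  rw [step2]
  -- step 3: per-tetra, identify edge set with powersetCard 2 and apply tetra
  have step3 : ∀ τ ∈ faces X 3,
      ((faces X 1).filter fun e => e ⊆ τ ∧
        ((τ \ e).filter fun u => insert u e ∈ α).card = 1).card
      = ((τ.powersetCard 3).filter (· ∈ α)).card *
        (4 - ((τ.powersetCard 3).filter (· ∈ α)).card) := by
    intro τ hτ
    have hτX := (mem_filter.1 hτ).1
    have hτ4 : τ.card = 4 := (mem_filter.1 hτ).2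
    have heq : (faces X 1).filter (fun e => e ⊆ τ ∧
        ((τ \ e).filter fun u => insert u e ∈ α).card = 1)
        = (τ.powersetCard 2).filter fun e =>
            ((τ \ e).filter fun u => insert u e ∈ α).card = 1 := by
      ext e
      simp only [faces, mem_filter, mem_powersetCard]
      constructor
      · rintro ⟨⟨heX, hec⟩, hsub, hQ⟩
        exact ⟨⟨hsub, hec⟩, hQ⟩
      · rintro ⟨⟨hsub, hec⟩, hQ⟩
        exact ⟨⟨hcpx τ hτX e hsub, hec⟩, hsub, hQ⟩
    rw [heq]
    exact tetra τ hτ4 α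
  rw [Finset.sum_congr rfl step3]
  -- step 4: fiberwise sum
  have hmaps : ∀ τ ∈ faces X 3, ((τ.powersetCard 3).filter (· ∈ α)).card ∈ Finset.range 5 := by
    intro τ hτ
    have hτ4 : τ.card = 4 := (mem_filter.1 hτ).2
    have h1 : ((τ.powersetCard 3).filter (· ∈ α)).card ≤ (τ.powersetCard 3).card :=
      card_le_card (filter_subset _ _)
    rw [card_powersetCard, hτ4] at h1
    norm_num at h1
    simp only [Finset.mem_range]
    omega
  rw [← Finset.sum_fiberwise_of_maps_to hmaps
    (fun τ => ((τ.powersetCard 3).filter (· ∈ α)).card *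
      (4 - ((τ.powersetCard 3).filter (· ∈ α)).card))]
  have inner : ∀ n ∈ Finset.range 5,
      ∑ τ ∈ (faces X 3).filter (fun τ => ((τ.powersetCard 3).filter (· ∈ α)).card = n),
        ((τ.powersetCard 3).filter (· ∈ α)).card *
          (4 - ((τ.powersetCard 3).filter (· ∈ α)).card)
      = t n * (n * (4 - n)) := by
    intro n _
    rw [ht n, Finset.card_filter]
    rw [Finset.sum_congr rfl (fun τ hτ => by
      rw [(mem_filter.1 hτ).2]), Finset.sum_const, smul_eq_mul]
    congr 1
    rw [Finset.card_filter]
  rw [Finset.sum_congr rfl inner]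
  simp [Finset.sum_range_succ]
  ring
end
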